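/- arXiv:1104.1496 — 2 statements merged into one kernel-verified Lean document; each statement's English description precedes it below -/
import Mathlib

section
/- Let r > 0 and a, b ∈ ℝ. Let g : [0, r] → (0, 1] be continuously differentiable with g(r) = 1, and set ḡ = r⁻¹·∫₀^r g(z) dz. Then r⁻¹·[ 2a·∫₀^r g(z)·(∫_z^r (g(v) − 1) dv) dz + ∫₀^r (a·z² − b·z)·g′(z) dz ] = a·r·(ḡ − 1)² + b·(ḡ − 1). -/
/-!
With `U z = ∫_z^r g`, so that `U' = -g` and `U r = 0`, the inner integral is
`∫_z^r (g - 1) = U z - (r - z)`, and the integrand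
`2a g(z) (U z - (r - z)) + (a z² - b z) g'(z)` is the derivative of
`F z = (a z² - b z) g z - a (r - U z)² + b (r - U z)`.
Since `g r = 1`, `F r = 0`, while `F 0 = -a (U 0 - r)² - b (U 0 - r)`; dividing by `r` gives the claim.
-/

open MeasureTheory intervalIntegral Set

theorem hasDerivAt_integral_left_of_continuousOn {f : ℝ → ℝ} {a b x : ℝ}
    (hf : ContinuousOn f (Icc a b)) (hx : x ∈ Ioo a b) :
    HasDerivAt (fun u => ∫ v in u..b, f v) (-f x) x :=
  integral_hasDerivAt_left
    ((hf.intervalIntegrable_of_Icc (hx.1.trans hx.2).le).mono_set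
      (by rw [uIcc_of_le hx.2.le, uIcc_of_le (hx.1.trans hx.2).le]
          exact Icc_subset_Icc_left hx.1.le))
    ((hf.mono Ioo_subset_Icc_self).stronglyMeasurableAtFilter isOpen_Ioo x hx)
    (hf.continuousAt (Icc_mem_nhds hx.1 hx.2))

theorem hasDerivAt_generator_antiderivative {g U : ℝ → ℝ} {g'x a b r x : ℝ}
    (hg : HasDerivAt g g'x x) (hU : HasDerivAt U (-g x) x) :
    HasDerivAt (fun z => (a * z ^ 2 - b * z) * g z - a * (r - U z) ^ 2 + b * (r - U z))
      (2 * a * g x * (U x - (r - x)) + (a * x ^ 2 - b * x) * g'x) x := by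
  have hrU : HasDerivAt (fun z => r - U z) (g x) x :=
    ((hasDerivAt_const x r).fun_sub hU).congr_deriv (by ring)
  have hpoly : HasDerivAt (fun z : ℝ => a * z ^ 2 - b * z) (a * (2 * x) - b) x :=
    (((hasDerivAt_pow 2 x).const_mul a).fun_sub ((hasDerivAt_id' x).const_mul b)).congr_deriv
      (by push_cast; ring)
  exact (((hpoly.fun_mul hg).fun_sub ((hrU.fun_pow 2).const_mul a)).fun_add
    (hrU.const_mul b)).congr_deriv (by push_cast; ring)

theorem two_mul_integral_mul_tail_add_integral_mul_deriv {g g' : ℝ → ℝ} {r : ℝ} (a b : ℝ)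
    (hr : 0 ≤ r) (hgr : g r = 1) (hderiv : ∀ z ∈ Icc 0 r, HasDerivAt g (g' z) z)
    (hg' : IntervalIntegrable g' volume 0 r) :
    2 * a * (∫ z in (0 : ℝ)..r, g z * ∫ v in z..r, (g v - 1)) +
        ∫ z in (0 : ℝ)..r, (a * z ^ 2 - b * z) * g' z
      = a * ((∫ z in (0 : ℝ)..r, g z) - r) ^ 2 + b * ((∫ z in (0 : ℝ)..r, g z) - r) := by
  have hgc : ContinuousOn g (Icc 0 r) := fun z hz => (hderiv z hz).continuousAt.continuousWithinAt
  set U : ℝ → ℝ := fun z => ∫ v in z..r, g v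
  have hUc : ContinuousOn U (Icc 0 r) := by
    simpa [uIcc_of_le hr] using continuousOn_primitive_interval_left (μ := volume)
      (hgc.integrableOn_Icc.mono_set (uIcc_of_le hr).subset)
  have htail : ∀ z ∈ Icc 0 r, ∫ v in z..r, (g v - 1) = U z - (r - z) := fun z hz => by
    have hgi : IntervalIntegrable g volume z r :=
      (hgc.mono (Icc_subset_Icc_left hz.1)).intervalIntegrable_of_Icc hz.2
    simp [integral_sub hgi intervalIntegrable_const, U]
  have hint : IntervalIntegrable (fun z => 2 * a * g z * (U z - (r - z))) volume 0 r :=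
    ContinuousOn.intervalIntegrable_of_Icc hr (by fun_prop)
  have hpoly : IntervalIntegrable (fun z => (a * z ^ 2 - b * z) * g' z) volume 0 r :=
    hg'.continuousOn_mul (g := fun z => a * z ^ 2 - b * z) (by fun_prop)
  have hFTC := integral_eq_sub_of_hasDeriv_right_of_le hr
    (by fun_prop : ContinuousOn (fun z => (a * z ^ 2 - b * z) * g z - a * (r - U z) ^ 2
      + b * (r - U z)) (Icc 0 r))
    (fun x hx => (hasDerivAt_generator_antiderivative (hderiv x (Ioo_subset_Icc_self hx))
      (hasDerivAt_integral_left_of_continuousOn hgc hx)).hasDerivWithinAt)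
    (hint.add hpoly)
  calc 2 * a * (∫ z in (0 : ℝ)..r, g z * ∫ v in z..r, (g v - 1)) +
        ∫ z in (0 : ℝ)..r, (a * z ^ 2 - b * z) * g' z
      = ∫ z in (0 : ℝ)..r, (2 * a * g z * (U z - (r - z)) + (a * z ^ 2 - b * z) * g' z) := by
        rw [integral_add hint hpoly, ← intervalIntegral.integral_const_mul]
        congr 1
        refine integral_congr fun z hz => ?_
        rw [htail z (uIcc_of_le hr ▸ hz)]
        ring
    _ = _ := hFTC
    _ = a * ((∫ z in (0 : ℝ)..r, g z) - r) ^ 2 + b * ((∫ z in (0 : ℝ)..r, g z) - r) := by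
        simp only [U, hgr, integral_same]
        ring

theorem generator_integral_identity_general (r a b : ℝ) (hr : 0 < r) (g g' : ℝ → ℝ)
    (hgr : g r = 1)
    (hderiv : ∀ z ∈ Set.Icc (0 : ℝ) r, HasDerivAt g (g' z) z)
    (hg'cont : ContinuousOn g' (Set.Icc 0 r)) :
    r⁻¹ * (2 * a * ∫ z in (0 : ℝ)..r, g z * ∫ v in z..r, (g v - 1)) +
      r⁻¹ * (∫ z in (0 : ℝ)..r, (a * z ^ 2 - b * z) * g' z)
      = a * r * (r⁻¹ * (∫ z in (0 : ℝ)..r, g z) - 1) ^ 2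
        + b * (r⁻¹ * (∫ z in (0 : ℝ)..r, g z) - 1) := by
  rw [← mul_add, two_mul_integral_mul_tail_add_integral_mul_deriv a b hr.le hgr hderiv
    (hg'cont.intervalIntegrable_of_Icc hr.le)]
  field_simp

/-- the key integral identity for the generator computation on `[0, r]`:
`r⁻¹ [ 2a ∫₀^r g(z) (∫_z^r (g(v) - 1) dv) dz + ∫₀^r (a z² - b z) g'(z) dz ]
  = a r (ḡ - 1)² + b (ḡ - 1)` where `ḡ = r⁻¹ ∫₀^r g`. -/
theorem generator_integral_identity (r a b : ℝ) (hr : 0 < r) (g g' : ℝ → ℝ)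
    (hg : ∀ z ∈ Set.Icc (0 : ℝ) r, g z ∈ Set.Ioc (0 : ℝ) 1)
    (hgr : g r = 1)
    (hderiv : ∀ z ∈ Set.Icc (0 : ℝ) r, HasDerivAt g (g' z) z)
    (hg'cont : ContinuousOn g' (Set.Icc 0 r)) :
    r⁻¹ * (2 * a * ∫ z in (0 : ℝ)..r, g z * ∫ v in z..r, (g v - 1)) +
      r⁻¹ * (∫ z in (0 : ℝ)..r, (a * z ^ 2 - b * z) * g' z)
      = a * r * (r⁻¹ * (∫ z in (0 : ℝ)..r, g z) - 1) ^ 2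
        + b * (r⁻¹ * (∫ z in (0 : ℝ)..r, g z) - 1) :=
  generator_integral_identity_general r a b hr g g' hgr hderiv hg'cont
end

section
/- Let a, b ∈ ℝ. Let g : [0, ∞) → (0, 1] be continuously differentiable with g(z) = 1 for all z ≥ r_g, for some r_g > 0. Set β = ∫₀^∞ (1 − g(z)) dz. Then 2a·∫₀^∞ g(z)·(∫_z^∞ (g(v) − 1) dv) dz + ∫₀^∞ (a·z² − b·z)·g′(z) dz = a·β² − b·β. -/
/-!
Write `T z = ∫_z^r (1 - g)`, so that `T' = g - 1`, `β = T 0` and the inner integral is `-T z`;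
everything vanishes beyond `r = r_g`, so all integrals live on `[0, r]`. Splitting
`g = 1 - (1 - g)`, the first term is `-2a ∫ T + a β²`, because `(1 - g) T = -(T² / 2)'`.
Integrating the second term by parts twice turns it into `2a ∫ z (1 - g) - b β = 2a ∫ T - b β`,
and the `∫ T` terms cancel.
-/

open MeasureTheory Set

lemma setIntegral_Ioi_eq_intervalIntegral_of_eq_zero {f : ℝ → ℝ} {r : ℝ}
    (hf : ∀ x, r < x → f x = 0) (c : ℝ) :
    ∫ x in Ioi c, f x = ∫ x in c..r, f x := by
  rcases le_or_gt c r with hcr | hrc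
  · rw [intervalIntegral.integral_of_le hcr]
    exact setIntegral_eq_of_subset_of_forall_sdiff_eq_zero measurableSet_Ioi Ioc_subset_Ioi_self
      fun x hx => hf x (not_le.mp fun hxr => hx.2 ⟨hx.1, hxr⟩)
  · rw [intervalIntegral.integral_of_ge hrc.le,
      setIntegral_eq_zero_of_forall_eq_zero fun x (hx : x ∈ Ioi c) => hf x (hrc.trans hx),
      setIntegral_eq_zero_of_forall_eq_zero fun x hx => hf x hx.1, neg_zero]

section Tail

variable {f : ℝ → ℝ}

lemma hasDerivAt_integral_tail (hf : Continuous f) (b x : ℝ) :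
    HasDerivAt (fun y => ∫ t in y..b, f t) (-f x) x :=
  intervalIntegral.integral_hasDerivAt_left (hf.intervalIntegrable _ _)
    (hf.stronglyMeasurableAtFilter _ _) hf.continuousAt

lemma continuous_integral_tail (hf : Continuous f) (b : ℝ) :
    Continuous fun y => ∫ t in y..b, f t :=
  Differentiable.continuous fun x => (hasDerivAt_integral_tail hf b x).differentiableAt

lemma integral_mul_integral_tail (hf : Continuous f) (a b : ℝ) :
    ∫ x in a..b, f x * ∫ t in x..b, f t = (∫ x in a..b, f x) ^ 2 / 2 := by
  have hprim : ∀ x, HasDerivAt (fun y => -(∫ t in y..b, f t) ^ 2 / 2)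
      (f x * ∫ t in x..b, f t) x := fun x =>
    (((hasDerivAt_integral_tail hf b x).pow 2).neg.div_const 2).congr_deriv (by ring)
  rw [intervalIntegral.integral_eq_sub_of_hasDerivAt (fun x _ => hprim x)
      ((hf.mul (continuous_integral_tail hf b)).intervalIntegrable _ _),
    intervalIntegral.integral_same]
  ring

lemma integral_id_mul_eq_integral_tail (hf : Continuous f) (a b : ℝ) :
    ∫ x in a..b, x * f x = a * (∫ x in a..b, f x) + ∫ x in a..b, ∫ t in x..b, f t := by
  have hneg : ∀ x, HasDerivAt (fun y => -∫ t in y..b, f t) (f x) x := fun x =>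
    (hasDerivAt_integral_tail hf b x).neg.congr_deriv (neg_neg _)
  rw [intervalIntegral.integral_mul_deriv_eq_deriv_mul (fun x _ => hasDerivAt_id' x)
    (fun x _ => hneg x) intervalIntegrable_const (hf.intervalIntegrable _ _)]
  simp [intervalIntegral.integral_same, intervalIntegral.integral_neg]

end Tail

lemma integral_quadratic_mul_deriv_eq {g g' : ℝ → ℝ} (a b r : ℝ)
    (hderiv : ∀ z, HasDerivAt g (g' z) z) (hg' : Continuous g') (hgr : g r = 1) :
    ∫ z in 0..r, (a * z ^ 2 - b * z) * g' z = ∫ z in 0..r, (2 * a * z - b) * (1 - g z) := by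
  have hp : ∀ z, HasDerivAt (fun z => a * z ^ 2 - b * z) (2 * a * z - b) z := fun z =>
    (((hasDerivAt_pow 2 z).const_mul a).sub ((hasDerivAt_id z).const_mul b)).congr_deriv (by ring)
  have hparts := intervalIntegral.integral_mul_deriv_eq_deriv_mul (a := 0) (b := r)
    (fun z _ => hp z) (fun z _ => (hderiv z).const_sub 1)
    ((by fun_prop : Continuous fun z => 2 * a * z - b).intervalIntegrable _ _)
    (hg'.neg.intervalIntegrable _ _)
  calc ∫ z in 0..r, (a * z ^ 2 - b * z) * g' z
      = -∫ z in 0..r, (a * z ^ 2 - b * z) * -g' z := by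
        rw [← intervalIntegral.integral_neg]; simp
    _ = ∫ z in 0..r, (2 * a * z - b) * (1 - g z) := by rw [hparts, hgr]; ring

lemma intervalIntegral_generator_identity {g g' : ℝ → ℝ} (a b r : ℝ)
    (hderiv : ∀ z, HasDerivAt g (g' z) z) (hg' : Continuous g') (hgr : g r = 1) :
    2 * a * (∫ z in 0..r, g z * ∫ v in z..r, (g v - 1)) +
      (∫ z in 0..r, (a * z ^ 2 - b * z) * g' z)
      = a * (∫ z in 0..r, (1 - g z)) ^ 2 - b * (∫ z in 0..r, (1 - g z)) := by
  have hg : Continuous g := Differentiable.continuous fun z => (hderiv z).differentiableAt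
  have hh : Continuous fun z => 1 - g z := by fun_prop
  set T : ℝ → ℝ := fun z => ∫ v in z..r, (1 - g v)
  have hTc : Continuous T := continuous_integral_tail hh r
  have hinner : ∀ z, ∫ v in z..r, (g v - 1) = -T z := fun z => by
    rw [← intervalIntegral.integral_neg]; simp
  have hfirst : ∫ z in 0..r, g z * ∫ v in z..r, (g v - 1)
      = (∫ z in 0..r, (1 - g z) * T z) - ∫ z in 0..r, T z := by
    rw [← intervalIntegral.integral_sub ?_ (hTc.intervalIntegrable _ _)]
    · simp_rw [hinner]; congr 1; ext z; ring
    · exact (hh.mul hTc).intervalIntegrable _ _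
  have hsecond : ∫ z in 0..r, (a * z ^ 2 - b * z) * g' z
      = 2 * a * (∫ z in 0..r, T z) - b * T 0 := by
    have hmoment : ∫ z in 0..r, z * (1 - g z) = ∫ z in 0..r, T z := by
      simpa using integral_id_mul_eq_integral_tail hh 0 r
    rw [integral_quadratic_mul_deriv_eq a b r hderiv hg' hgr, ← hmoment,
      ← intervalIntegral.integral_const_mul, ← intervalIntegral.integral_const_mul,
      ← intervalIntegral.integral_sub ?_ ?_]
    · congr 1; ext z; ring
    · exact (continuous_const.mul (continuous_id.mul hh)).intervalIntegrable _ _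
    · exact (continuous_const.mul hh).intervalIntegrable _ _
  rw [hfirst, hsecond, integral_mul_integral_tail hh]
  ring

theorem generator_integral_identity_infinite_general (a b r_g : ℝ)
    (g g' : ℝ → ℝ)
    (hg1 : ∀ z : ℝ, r_g ≤ z → g z = 1)
    (hderiv : ∀ z : ℝ, HasDerivAt g (g' z) z)
    (hg'cont : Continuous g') :
    2 * a * (∫ z in Set.Ioi (0 : ℝ), g z * ∫ v in Set.Ioi z, (g v - 1)) +
      (∫ z in Set.Ioi (0 : ℝ), (a * z ^ 2 - b * z) * g' z)
      = a * (∫ z in Set.Ioi (0 : ℝ), (1 - g z)) ^ 2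
        - b * (∫ z in Set.Ioi (0 : ℝ), (1 - g z)) := by
  have hg1' : ∀ z, r_g < z → g z - 1 = 0 := fun z hz => by rw [hg1 z hz.le, sub_self]
  have hinner : ∀ z, ∫ v in Ioi z, (g v - 1) = ∫ v in z..r_g, (g v - 1) :=
    setIntegral_Ioi_eq_intervalIntegral_of_eq_zero hg1'
  have hg'0 : ∀ z, r_g < z → g' z = 0 := fun z hz => by
    have hconst : g =ᶠ[nhds z] fun _ => 1 :=
      Filter.eventually_of_mem (Ioi_mem_nhds hz) fun y hy => hg1 y (le_of_lt hy)
    exact (hderiv z).unique ((hasDerivAt_const z 1).congr_of_eventuallyEq hconst)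
  rw [setIntegral_Ioi_eq_intervalIntegral_of_eq_zero (r := r_g) (fun z hz => by
      rw [setIntegral_eq_zero_of_forall_eq_zero fun v (hv : v ∈ Ioi z) => hg1' v (hz.trans hv),
        mul_zero]),
    setIntegral_Ioi_eq_intervalIntegral_of_eq_zero (r := r_g) (fun z hz => by
      rw [hg'0 z hz, mul_zero]),
    setIntegral_Ioi_eq_intervalIntegral_of_eq_zero (r := r_g) (fun z hz => by
      rw [hg1 z hz.le, sub_self])]
  simp_rw [hinner]
  exact intervalIntegral_generator_identity a b r_g hderiv hg'cont (hg1 r_g le_rfl)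

/-- the key integral identity for the limiting (`r = ∞`) generator:
with `β = ∫₀^∞ (1 - g(z)) dz`,
`2a ∫₀^∞ g(z) (∫_z^∞ (g(v) - 1) dv) dz + ∫₀^∞ (a z² - b z) g'(z) dz = a β² - b β`. -/
theorem generator_integral_identity_infinite (a b r_g : ℝ) (hrg : 0 < r_g)
    (g g' : ℝ → ℝ)
    (hg : ∀ z : ℝ, 0 ≤ z → g z ∈ Set.Ioc (0 : ℝ) 1)
    (hg1 : ∀ z : ℝ, r_g ≤ z → g z = 1)
    (hderiv : ∀ z : ℝ, HasDerivAt g (g' z) z)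
    (hg'cont : Continuous g') :
    2 * a * (∫ z in Set.Ioi (0 : ℝ), g z * ∫ v in Set.Ioi z, (g v - 1)) +
      (∫ z in Set.Ioi (0 : ℝ), (a * z ^ 2 - b * z) * g' z)
      = a * (∫ z in Set.Ioi (0 : ℝ), (1 - g z)) ^ 2
        - b * (∫ z in Set.Ioi (0 : ℝ), (1 - g z)) :=
  generator_integral_identity_infinite_general a b r_g g g' hg1 hderiv hg'cont
end
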